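/- arXiv:2309.03375 — 3 statements merged into one kernel-verified Lean document; each statement's English description precedes it below -/
import Mathlib

section
/- (DDQ POD extended data error formulas.) Let T > 0, N ≥ 3, Δt = T/(N−1), and u^1,…,u^N ∈ X. Suppose the POD decomposition hypothesis holds for the DDQ data set w^1 = u^1, w^2 = ∂u^1, and w^{j+1} = ∂∂u^j (j = 2,…,N−1) with weights γ_1 = γ_2 = 1 and γ_j = Δt for j = 3,…,N, with POD eigenvalues λ_k^{DDQ}, modes φ_k, and rank s. Then for 1 ≤ r ≤ s: (i) ‖u^1 − Π_r^X u^1‖_X² + ‖∂u^1 − Π_r^X ∂u^1‖_X² + Σ_{j=2}^{N−1} Δt ‖∂∂u^j − Π_r^X ∂∂u^j‖_X² = Σ_{k=r+1}^s λ_k^{DDQ}; (ii) if (·,·)_Y is a second inner product on X, the same left-hand side computed in the Y-norm equals Σ_{k=r+1}^s λ_k^{DDQ} ‖φ_k‖_Y²; (iii) if in addition π_r : X → X is a linear projection onto X_r (π_r∘π_r = π_r, range(π_r) = X_r), then ‖u^1 − π_r u^1‖_Y² + ‖∂u^1 − π_r ∂u^1‖_Y² + Σ_{j=2}^{N−1}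 Δt ‖∂∂u^j − π_r ∂∂u^j‖_Y² = Σ_{k=r+1}^s λ_k^{DDQ} ‖φ_k − π_r φ_k‖_Y². -/
open Finset RealInnerProductSpace

/-- forward difference quotient -/
noncomputable def fdiff {Z : Type*} [AddCommGroup Z] [Module ℝ Z]
    (dt : ℝ) (z : ℕ → Z) (j : ℕ) : Z := dt⁻¹ • (z (j + 1) - z j)

/-- backward difference quotient -/
noncomputable def bdiff {Z : Type*} [AddCommGroup Z] [Module ℝ Z]
    (dt : ℝ) (z : ℕ → Z) (j : ℕ) : Z := dt⁻¹ • (z j - z (j - 1))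

/-- second difference quotient -/
noncomputable def ddq {Z : Type*} [AddCommGroup Z] [Module ℝ Z]
    (dt : ℝ) (z : ℕ → Z) (j : ℕ) : Z :=
  (dt ^ 2)⁻¹ • (z (j + 1) - (2 : ℝ) • z j + z (j - 1))

/-- backward average -/
noncomputable def bavg {Z : Type*} [AddCommGroup Z] [Module ℝ Z]
    (z : ℕ → Z) (j : ℕ) : Z := (2 : ℝ)⁻¹ • (z j + z (j - 1))

/-- centered average -/
noncomputable def cavg {Z : Type*} [AddCommGroup Z] [Module ℝ Z]
    (z : ℕ → Z) (j : ℕ) : Z := (4 : ℝ)⁻¹ • (z (j + 1) + (2 : ℝ) • z j + z (j - 1))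

/-- centered difference -/
noncomputable def cdiff {Z : Type*} [AddCommGroup Z] [Module ℝ Z]
    (dt : ℝ) (z : ℕ → Z) (j : ℕ) : Z := (2 * dt)⁻¹ • (z (j + 1) - z (j - 1))

/-!
Let `P` be any linear map fixing `φ₁, …, φᵣ` and `B` any bilinear form. Applying `id - P` to the
POD expansion gives `wʲ - P wʲ = ∑ₖ λₖ^{1/2} (fₖ)ⱼ (φₖ - P φₖ)` with the terms `k ≤ r` vanishing, so
the `Γ`-orthonormality of the `fₖ` collapses the weighted double sum
`∑ⱼ γⱼ B(wʲ - P wʲ, wʲ - P wʲ)` to `∑_{k > r} λₖ B(φₖ - P φₖ, φₖ - P φₖ)`; with the DDQ weights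
the left side is exactly the stated sum. Taking `P = π` gives (iii). The orthogonal projection
`Π_r^X` is such a `P` and also kills `φₖ` for `k > r`, which gives (ii), and (i) is (ii) for the
inner product of `X`.
-/

theorem sum_weight_mul_bilin_expansion_of_orthonormal {ι κ V : Type*} [AddCommGroup V]
    [Module ℝ V] [DecidableEq κ] (J : Finset ι)
    (S : Finset κ) (γ : ι → ℝ) (a : κ → ℝ) (f : κ → ι → ℝ) (ψ : κ → V)
    (B : V →ₗ[ℝ] V →ₗ[ℝ] ℝ)
    (hf : ∀ k ∈ S, ∀ l ∈ S, ∑ j ∈ J, γ j * f k j * f l j = if k = l then 1 else 0) :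
    ∑ j ∈ J, γ j * B (∑ k ∈ S, (a k * f k j) • ψ k) (∑ k ∈ S, (a k * f k j) • ψ k)
      = ∑ k ∈ S, a k ^ 2 * B (ψ k) (ψ k) := by
  have expand : ∀ j, γ j * B (∑ k ∈ S, (a k * f k j) • ψ k) (∑ k ∈ S, (a k * f k j) • ψ k)
      = ∑ k ∈ S, ∑ l ∈ S, γ j * f k j * f l j * (a k * a l * B (ψ k) (ψ l)) := by
    intro j
    simp only [map_sum, map_smul, LinearMap.sum_apply, LinearMap.smul_apply, smul_eq_mul,
      Finset.mul_sum]
    rw [Finset.sum_comm]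
    exact Finset.sum_congr rfl fun k _ => Finset.sum_congr rfl fun l _ => by ring
  simp only [expand]
  rw [Finset.sum_comm]
  refine Finset.sum_congr rfl fun k hk => ?_
  rw [Finset.sum_comm]
  simp only [← Finset.sum_mul]
  rw [Finset.sum_congr rfl fun l hl => by rw [hf k hk l hl]]
  simp only [ite_mul, one_mul, zero_mul, Finset.sum_ite_eq, if_pos hk]
  ring

theorem sum_Icc_one_mul_eq_of_ddq_weights (N : ℕ) (hN : 2 ≤ N) (dt : ℝ) (γ c : ℕ → ℝ)
    (hγ1 : γ 1 = 1) (hγ2 : γ 2 = 1) (hγj : ∀ j ∈ Finset.Icc 3 N, γ j = dt) :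
    ∑ j ∈ Finset.Icc 1 N, γ j * c j
      = c 1 + c 2 + ∑ j ∈ Finset.Icc 2 (N - 1), dt * c (j + 1) := by
  have hshift : Finset.Icc 3 N = (Finset.Icc 2 (N - 1)).map (addRightEmbedding 1) := by
    rw [Finset.map_add_right_Icc, Nat.sub_add_cancel (by omega)]
  have h1 : Finset.Icc 1 N = insert 1 (Finset.Icc 2 N) :=
    (Finset.insert_Icc_add_one_left_eq_Icc (by omega)).symm
  have h2 : Finset.Icc 2 N = insert 2 (Finset.Icc 3 N) :=
    (Finset.insert_Icc_add_one_left_eq_Icc hN).symm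
  rw [h1, Finset.sum_insert (by simp), h2, Finset.sum_insert (by simp), hγ1, hγ2,
    Finset.sum_congr rfl fun j hj => by rw [hγj j hj], hshift, Finset.sum_map]
  simp only [addRightEmbedding_apply, one_mul, add_assoc]

theorem sum_weight_mul_bilin_sub_apply_eq_of_pod {V : Type*} [AddCommGroup V] [Module ℝ V]
    (N s r : ℕ) (γ lam : ℕ → ℝ) (f : ℕ → ℕ → ℝ) (φ w : ℕ → V)
    (hlam : ∀ k ∈ Finset.Icc 1 s, 0 ≤ lam k)
    (hf : ∀ k ∈ Finset.Icc 1 s, ∀ l ∈ Finset.Icc 1 s,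
      (∑ j ∈ Finset.Icc 1 N, γ j * f k j * f l j) = if k = l then 1 else 0)
    (hsvd : ∀ j ∈ Finset.Icc 1 N,
      w j = ∑ k ∈ Finset.Icc 1 s, (Real.sqrt (lam k) * f k j) • φ k)
    (B : V →ₗ[ℝ] V →ₗ[ℝ] ℝ) (P : V →ₗ[ℝ] V) (hP : ∀ k ∈ Finset.Icc 1 r, P (φ k) = φ k) :
    ∑ j ∈ Finset.Icc 1 N, γ j * B (w j - P (w j)) (w j - P (w j))
      = ∑ k ∈ Finset.Icc (r + 1) s, lam k * B (φ k - P (φ k)) (φ k - P (φ k)) := by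
  have hw : ∀ j ∈ Finset.Icc 1 N, w j - P (w j)
      = ∑ k ∈ Finset.Icc 1 s, (Real.sqrt (lam k) * f k j) • (φ k - P (φ k)) := by
    intro j hj
    simp only [hsvd j hj, map_sum, map_smul, smul_sub, Finset.sum_sub_distrib]
  rw [Finset.sum_congr rfl fun j hj => by rw [hw j hj],
    sum_weight_mul_bilin_expansion_of_orthonormal _ _ _ _ _ _ _ hf]
  symm
  refine Finset.sum_subset_zero_on_sdiff (Finset.Icc_subset_Icc_left (by omega)) ?_ ?_
  · intro k hk
    simp only [Finset.mem_sdiff, Finset.mem_Icc] at hk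
    rw [hP k (Finset.mem_Icc.mpr ⟨hk.1.1, by omega⟩), sub_self, map_zero, mul_zero]
  · intro k hk
    rw [Real.sq_sqrt (hlam k (Finset.Icc_subset_Icc_left (by omega) hk))]

theorem mem_orthogonal_span_image_Icc {E : Type*} [NormedAddCommGroup E]
    [InnerProductSpace ℝ E] (φ : ℕ → E) (s r : ℕ)
    (hφ : ∀ k ∈ Finset.Icc 1 s, ∀ l ∈ Finset.Icc 1 s, ⟪φ k, φ l⟫ = if k = l then 1 else 0)
    {k : ℕ} (hk : k ∈ Finset.Icc (r + 1) s) :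
    φ k ∈ (Submodule.span ℝ (φ '' Set.Icc 1 r))ᗮ := by
  simp only [Finset.mem_Icc] at hk
  have hortho : Submodule.span ℝ {φ k} ⟂ Submodule.span ℝ (φ '' Set.Icc 1 r) := by
    refine Submodule.isOrtho_span.mpr ?_
    rintro _ rfl _ ⟨l, hl, rfl⟩
    rw [hφ k (by simp; omega) l (by simp at hl ⊢; omega), if_neg (by simp at hl; omega)]
  exact hortho (Submodule.mem_span_singleton_self _)

theorem ddq_pod_error_eq {X : Type*} [AddCommGroup X] [Module ℝ X]
    (N : ℕ) (hN : 2 ≤ N) (dt : ℝ) (u w : ℕ → X) (γ : ℕ → ℝ)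
    (hw1 : w 1 = u 1) (hw2 : w 2 = fdiff dt u 1)
    (hwj : ∀ j ∈ Finset.Icc 2 (N - 1), w (j + 1) = ddq dt u j)
    (hγ1 : γ 1 = 1) (hγ2 : γ 2 = 1) (hγj : ∀ j ∈ Finset.Icc 3 N, γ j = dt)
    (s : ℕ) (lam : ℕ → ℝ) (φ : ℕ → X) (f : ℕ → ℕ → ℝ)
    (hlam : ∀ k ∈ Finset.Icc 1 s, 0 ≤ lam k)
    (hf : ∀ k ∈ Finset.Icc 1 s, ∀ l ∈ Finset.Icc 1 s,
      (∑ j ∈ Finset.Icc 1 N, γ j * f k j * f l j) = if k = l then 1 else 0)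
    (hsvd : ∀ j ∈ Finset.Icc 1 N,
      w j = ∑ k ∈ Finset.Icc 1 s, (Real.sqrt (lam k) * f k j) • φ k)
    (r : ℕ) (B : X →ₗ[ℝ] X →ₗ[ℝ] ℝ) (P : X →ₗ[ℝ] X)
    (hP : ∀ k ∈ Finset.Icc 1 r, P (φ k) = φ k) :
    B (u 1 - P (u 1)) (u 1 - P (u 1))
        + B (fdiff dt u 1 - P (fdiff dt u 1)) (fdiff dt u 1 - P (fdiff dt u 1))
        + ∑ j ∈ Finset.Icc 2 (N - 1),
            dt * B (ddq dt u j - P (ddq dt u j)) (ddq dt u j - P (ddq dt u j))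
      = ∑ k ∈ Finset.Icc (r + 1) s, lam k * B (φ k - P (φ k)) (φ k - P (φ k)) := by
  rw [← hw1, ← hw2, Finset.sum_congr rfl fun j hj =>
    congrArg (fun x => dt * B (x - P x) (x - P x)) (hwj j hj).symm]
  exact (sum_Icc_one_mul_eq_of_ddq_weights N hN dt γ _ hγ1 hγ2 hγj).symm.trans
    (sum_weight_mul_bilin_sub_apply_eq_of_pod N s r γ lam f φ w hlam hf hsvd B P hP)

theorem stmt_7_general
    {X : Type*} [NormedAddCommGroup X] [InnerProductSpace ℝ X]
    (N : ℕ) (hN : 3 ≤ N)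
    (dt : ℝ)
    (u w : ℕ → X) (γ : ℕ → ℝ)
    (hw1 : w 1 = u 1) (hw2 : w 2 = fdiff dt u 1)
    (hwj : ∀ j ∈ Finset.Icc 2 (N - 1), w (j + 1) = ddq dt u j)
    (hγ1 : γ 1 = 1) (hγ2 : γ 2 = 1) (hγj : ∀ j ∈ Finset.Icc 3 N, γ j = dt)
    (s : ℕ) (lam : ℕ → ℝ) (φ : ℕ → X) (f : ℕ → ℕ → ℝ)
    (hlam : ∀ k ∈ Finset.Icc 1 s, 0 < lam k)
    (hφ : ∀ k ∈ Finset.Icc 1 s, ∀ l ∈ Finset.Icc 1 s,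
      ⟪φ k, φ l⟫ = if k = l then 1 else 0)
    (hf : ∀ k ∈ Finset.Icc 1 s, ∀ l ∈ Finset.Icc 1 s,
      (∑ j ∈ Finset.Icc 1 N, γ j * f k j * f l j) = if k = l then 1 else 0)
    (hsvd : ∀ j ∈ Finset.Icc 1 N,
      w j = ∑ k ∈ Finset.Icc 1 s, (Real.sqrt (lam k) * f k j) • φ k)
    (r : ℕ)
    (Pr : X → X)
    (hPrmem : ∀ x, Pr x ∈ Submodule.span ℝ (φ '' Set.Icc 1 r))
    (hProrth : ∀ x, ∀ v ∈ Submodule.span ℝ (φ '' Set.Icc 1 r),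
      ⟪x - Pr x, v⟫ = 0)
    (ipY : X →ₗ[ℝ] X →ₗ[ℝ] ℝ)
    (π : X →ₗ[ℝ] X)
    (hππ : ∀ x, π (π x) = π x)
    (hπrange : LinearMap.range π = Submodule.span ℝ (φ '' Set.Icc 1 r)) :
    (‖u 1 - Pr (u 1)‖ ^ 2 + ‖fdiff dt u 1 - Pr (fdiff dt u 1)‖ ^ 2
        + ∑ j ∈ Finset.Icc 2 (N - 1), dt * ‖ddq dt u j - Pr (ddq dt u j)‖ ^ 2
      = ∑ k ∈ Finset.Icc (r + 1) s, lam k)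
    ∧ (ipY (u 1 - Pr (u 1)) (u 1 - Pr (u 1))
        + ipY (fdiff dt u 1 - Pr (fdiff dt u 1)) (fdiff dt u 1 - Pr (fdiff dt u 1))
        + ∑ j ∈ Finset.Icc 2 (N - 1),
            dt * ipY (ddq dt u j - Pr (ddq dt u j)) (ddq dt u j - Pr (ddq dt u j))
      = ∑ k ∈ Finset.Icc (r + 1) s, lam k * ipY (φ k) (φ k))
    ∧ (ipY (u 1 - π (u 1)) (u 1 - π (u 1))
        + ipY (fdiff dt u 1 - π (fdiff dt u 1)) (fdiff dt u 1 - π (fdiff dt u 1))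
        + ∑ j ∈ Finset.Icc 2 (N - 1),
            dt * ipY (ddq dt u j - π (ddq dt u j)) (ddq dt u j - π (ddq dt u j))
      = ∑ k ∈ Finset.Icc (r + 1) s, lam k * ipY (φ k - π (φ k)) (φ k - π (φ k))) := by
  set V := Submodule.span ℝ (φ '' Set.Icc 1 r)
  have : FiniteDimensional ℝ V := FiniteDimensional.span_of_finite ℝ ((Set.finite_Icc 1 r).image φ)
  have hφV : ∀ k ∈ Finset.Icc 1 r, φ k ∈ V := fun k hk =>
    Submodule.subset_span ⟨k, Finset.mem_Icc.mp hk, rfl⟩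
  have hPr : ∀ x, Pr x = V.starProjection x := fun x =>
    (V.eq_starProjection_of_mem_of_inner_eq_zero (hPrmem x) (hProrth x)).symm
  have hPr_error : ∀ B : X →ₗ[ℝ] X →ₗ[ℝ] ℝ,
      B (u 1 - Pr (u 1)) (u 1 - Pr (u 1))
        + B (fdiff dt u 1 - Pr (fdiff dt u 1)) (fdiff dt u 1 - Pr (fdiff dt u 1))
        + ∑ j ∈ Finset.Icc 2 (N - 1),
            dt * B (ddq dt u j - Pr (ddq dt u j)) (ddq dt u j - Pr (ddq dt u j))
      = ∑ k ∈ Finset.Icc (r + 1) s, lam k * B (φ k) (φ k) := by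
    intro B
    simp only [hPr]
    refine (ddq_pod_error_eq N (by omega) dt u w γ hw1 hw2 hwj hγ1 hγ2 hγj s lam φ f
      (fun k hk => (hlam k hk).le) hf hsvd r B V.starProjection
      fun k hk => V.starProjection_eq_self_iff.mpr (hφV k hk)).trans
      (Finset.sum_congr rfl fun k hk => ?_)
    rw [ContinuousLinearMap.coe_coe, V.starProjection_apply_eq_zero_iff.mpr
      (mem_orthogonal_span_image_Icc φ s r hφ hk), sub_zero]
  refine ⟨?_, hPr_error ipY, ddq_pod_error_eq N (by omega) dt u w γ hw1 hw2 hwj hγ1 hγ2 hγj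
    s lam φ f (fun k hk => (hlam k hk).le) hf hsvd r ipY π fun k hk => ?_⟩
  · have h := hPr_error (innerₗ X)
    simp only [innerₗ_apply_apply, real_inner_self_eq_norm_sq] at h
    refine h.trans (Finset.sum_congr rfl fun k hk => ?_)
    have hk' : k ∈ Finset.Icc 1 s := Finset.Icc_subset_Icc_left (by omega) hk
    rw [← real_inner_self_eq_norm_sq, hφ k hk' k hk', if_pos rfl, mul_one]
  · obtain ⟨y, hy⟩ := hπrange ▸ hφV k hk
    rw [← hy, hππ]

theorem stmt_7
    {X : Type*} [NormedAddCommGroup X] [InnerProductSpace ℝ X] [CompleteSpace X]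
    (T : ℝ) (hT : 0 < T) (N : ℕ) (hN : 3 ≤ N)
    (dt : ℝ) (hdt : dt = T / ((N : ℝ) - 1))
    (u w : ℕ → X) (γ : ℕ → ℝ)
    (hw1 : w 1 = u 1) (hw2 : w 2 = fdiff dt u 1)
    (hwj : ∀ j ∈ Finset.Icc 2 (N - 1), w (j + 1) = ddq dt u j)
    (hγ1 : γ 1 = 1) (hγ2 : γ 2 = 1) (hγj : ∀ j ∈ Finset.Icc 3 N, γ j = dt)
    (s : ℕ) (lam : ℕ → ℝ) (φ : ℕ → X) (f : ℕ → ℕ → ℝ)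
    (hlam : ∀ k ∈ Finset.Icc 1 s, 0 < lam k)
    (hφ : ∀ k ∈ Finset.Icc 1 s, ∀ l ∈ Finset.Icc 1 s,
      ⟪φ k, φ l⟫ = if k = l then 1 else 0)
    (hf : ∀ k ∈ Finset.Icc 1 s, ∀ l ∈ Finset.Icc 1 s,
      (∑ j ∈ Finset.Icc 1 N, γ j * f k j * f l j) = if k = l then 1 else 0)
    (hsvd : ∀ j ∈ Finset.Icc 1 N,
      w j = ∑ k ∈ Finset.Icc 1 s, (Real.sqrt (lam k) * f k j) • φ k)
    (r : ℕ) (hr1 : 1 ≤ r) (hrs : r ≤ s)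
    (Pr : X → X)
    (hPrmem : ∀ x, Pr x ∈ Submodule.span ℝ (φ '' Set.Icc 1 r))
    (hProrth : ∀ x, ∀ v ∈ Submodule.span ℝ (φ '' Set.Icc 1 r),
      ⟪x - Pr x, v⟫ = 0)
    (ipY : X →ₗ[ℝ] X →ₗ[ℝ] ℝ)
    (hYsymm : ∀ x y, ipY x y = ipY y x)
    (hYpos : ∀ x : X, x ≠ 0 → 0 < ipY x x)
    (π : X →ₗ[ℝ] X)
    (hππ : ∀ x, π (π x) = π x)
    (hπrange : LinearMap.range π = Submodule.span ℝ (φ '' Set.Icc 1 r)) :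
    (‖u 1 - Pr (u 1)‖ ^ 2 + ‖fdiff dt u 1 - Pr (fdiff dt u 1)‖ ^ 2
        + ∑ j ∈ Finset.Icc 2 (N - 1), dt * ‖ddq dt u j - Pr (ddq dt u j)‖ ^ 2
      = ∑ k ∈ Finset.Icc (r + 1) s, lam k)
    ∧ (ipY (u 1 - Pr (u 1)) (u 1 - Pr (u 1))
        + ipY (fdiff dt u 1 - Pr (fdiff dt u 1)) (fdiff dt u 1 - Pr (fdiff dt u 1))
        + ∑ j ∈ Finset.Icc 2 (N - 1),
            dt * ipY (ddq dt u j - Pr (ddq dt u j)) (ddq dt u j - Pr (ddq dt u j))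
      = ∑ k ∈ Finset.Icc (r + 1) s, lam k * ipY (φ k) (φ k))
    ∧ (ipY (u 1 - π (u 1)) (u 1 - π (u 1))
        + ipY (fdiff dt u 1 - π (fdiff dt u 1)) (fdiff dt u 1 - π (fdiff dt u 1))
        + ∑ j ∈ Finset.Icc 2 (N - 1),
            dt * ipY (ddq dt u j - π (ddq dt u j)) (ddq dt u j - π (ddq dt u j))
      = ∑ k ∈ Finset.Icc (r + 1) s, lam k * ipY (φ k - π (φ k)) (φ k - π (φ k))) :=
  stmt_7_general N hN dt u w γ hw1 hw2 hwj hγ1 hγ2 hγj s lam φ f hlam hφ hf hsvd r Pr hPrmem hProrth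
    ipY π hππ hπrange
end

section
/- (Pointwise bound for backward averages via second difference quotients.) Let T > 0, N ≥ 3 an integer, Z a normed space, z^1,…,z^N ∈ Z, and Δt = T/(N−1). Then max_{2≤j≤N} ‖z̄^j‖_Z² ≤ C₂ ( ‖z^1‖_Z² + ‖∂z^1‖_Z² + Σ_{i=2}^{N−1} Δt ‖∂∂z^i‖_Z² ), where z̄^j = (z^j + z^{j−1})/2 and C₂ = 3 max{T³, 1}. -/
open Finset RealInnerProductSpace

/-! Since `∂z^(k+1) - ∂z^k = Δt • ∂∂z^(k+1)`, telescoping bounds every `‖∂z^k‖` with `k ≤ N - 1`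
by `‖∂z^1‖ + ∑ Δt ‖∂∂z^i‖`; telescoping once more, over at most `N - 1` steps of length `Δt`,
bounds every `‖z^n‖` with `n ≤ N` by `‖z^1‖ + T (‖∂z^1‖ + ∑ Δt ‖∂∂z^i‖)`, hence also `‖z̄^j‖`.
Squaring, `(a + b + c)² ≤ 3 (a² + b² + c²)` and Cauchy–Schwarz on the sum give the constant. -/

section Algebra

variable {Z : Type*} [AddCommGroup Z] [Module ℝ Z] {dt : ℝ} (z : ℕ → Z)

theorem smul_fdiff (hdt : dt ≠ 0) (k : ℕ) : dt • fdiff dt z k = z (k + 1) - z k := by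
  rw [fdiff, smul_smul, mul_inv_cancel₀ hdt, one_smul]

theorem fdiff_succ_sub_fdiff (hdt : dt ≠ 0) (k : ℕ) :
    fdiff dt z (k + 1) - fdiff dt z k = dt • ddq dt z (k + 1) := by
  have hcoef : dt * (dt ^ 2)⁻¹ = dt⁻¹ := by field_simp
  rw [fdiff, fdiff, ddq, Nat.add_sub_cancel, smul_smul, hcoef, ← smul_sub]
  congr 1
  module

end Algebra

theorem norm_le_norm_add_sum_norm_sub {E : Type*} [SeminormedAddCommGroup E] (u : ℕ → E)
    {m n : ℕ} (hmn : m ≤ n) : ‖u n‖ ≤ ‖u m‖ + ∑ i ∈ Ico m n, ‖u (i + 1) - u i‖ := by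
  have := dist_le_Ico_sum_dist u hmn
  simp only [dist_eq_norm, norm_sub_rev (u m), norm_sub_rev (u _) (u (_ + 1))] at this
  linarith [norm_le_insert' (u n) (u m)]

theorem sq_sum_mul_le_card_mul_mul_sum_mul_sq {ι : Type*} (s : Finset ι) (a : ι → ℝ) (c : ℝ) :
    (∑ i ∈ s, c * a i) ^ 2 ≤ #s * c * ∑ i ∈ s, c * a i ^ 2 := by
  have := sq_sum_le_card_mul_sum_sq (s := s) (f := fun i => c * a i)
  simp only [mul_pow, ← mul_sum] at this ⊢
  linarith

theorem sq_le_max_cube_one (T : ℝ) (hT : 0 ≤ T) : T ^ 2 ≤ max (T ^ 3) 1 := by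
  rcases le_total T 1 with h | h
  · exact le_max_of_le_right (by nlinarith)
  · exact le_max_of_le_left (by nlinarith)

theorem sq_add_mul_add_le {D E A S T : ℝ} (hT : 0 ≤ T) (hS : 0 ≤ S) (hAS : A ^ 2 ≤ T * S) :
    (D + T * (E + A)) ^ 2 ≤ 3 * max (T ^ 3) 1 * (D ^ 2 + E ^ 2 + S) := by
  have hT2 : T ^ 2 ≤ max (T ^ 3) 1 := sq_le_max_cube_one T hT
  have hA : T ^ 2 * A ^ 2 ≤ T ^ 3 * S := by
    nlinarith [mul_le_mul_of_nonneg_left hAS (sq_nonneg T)]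
  calc (D + T * (E + A)) ^ 2 ≤ 3 * (D ^ 2 + T ^ 2 * E ^ 2 + T ^ 2 * A ^ 2) := by
        nlinarith [sq_nonneg (D - T * E), sq_nonneg (D - T * A), sq_nonneg (T * E - T * A)]
    _ ≤ 3 * (D ^ 2 + T ^ 2 * E ^ 2 + T ^ 3 * S) := by linarith
    _ ≤ 3 * max (T ^ 3) 1 * (D ^ 2 + E ^ 2 + S) := by
        nlinarith [mul_le_mul_of_nonneg_right (le_max_right (T ^ 3) 1) (sq_nonneg D),
          mul_le_mul_of_nonneg_right hT2 (sq_nonneg E),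
          mul_le_mul_of_nonneg_right (le_max_left (T ^ 3) 1) hS]

section Normed

variable {Z : Type*} [NormedAddCommGroup Z] [NormedSpace ℝ Z] {dt : ℝ} (z : ℕ → Z)

theorem norm_bavg_le {B : ℝ} {j : ℕ} (hj : ‖z j‖ ≤ B) (hj' : ‖z (j - 1)‖ ≤ B) :
    ‖bavg z j‖ ≤ B := by
  rw [bavg, norm_smul, Real.norm_of_nonneg (by norm_num)]
  linarith [norm_add_le (z j) (z (j - 1))]

theorem norm_fdiff_le (hdt : 0 < dt) {k : ℕ} (hk : 1 ≤ k) :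
    ‖fdiff dt z k‖ ≤ ‖fdiff dt z 1‖ + ∑ i ∈ Icc 2 k, dt * ‖ddq dt z i‖ := by
  have hsum : ∑ i ∈ Ico 1 k, ‖fdiff dt z (i + 1) - fdiff dt z i‖
      = ∑ i ∈ Icc 2 k, dt * ‖ddq dt z i‖ := by
    simp only [fdiff_succ_sub_fdiff z hdt.ne', norm_smul, Real.norm_of_nonneg hdt.le]
    rw [sum_Ico_add' (fun i => dt * ‖ddq dt z i‖), Ico_add_one_right_eq_Icc]
  exact hsum ▸ norm_le_norm_add_sum_norm_sub (fdiff dt z) hk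

theorem norm_le_of_norm_fdiff_le (hdt : 0 < dt) {B : ℝ} {n : ℕ} (hn : 1 ≤ n)
    (hB : ∀ k, 1 ≤ k → k < n → ‖fdiff dt z k‖ ≤ B) :
    ‖z n‖ ≤ ‖z 1‖ + (n - 1 : ℕ) * dt * B := by
  have hsum : ∑ i ∈ Ico 1 n, ‖z (i + 1) - z i‖ ≤ (n - 1 : ℕ) * dt * B := by
    calc ∑ i ∈ Ico 1 n, ‖z (i + 1) - z i‖ ≤ ∑ i ∈ Ico 1 n, dt * B := by
          refine sum_le_sum fun i hi => ?_
          rw [mem_Ico] at hi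
          rw [← smul_fdiff z hdt.ne', norm_smul, Real.norm_of_nonneg hdt.le]
          exact mul_le_mul_of_nonneg_left (hB i hi.1 hi.2) hdt.le
      _ = (n - 1 : ℕ) * dt * B := by simp [mul_assoc]
  linarith [norm_le_norm_add_sum_norm_sub z hn]

theorem norm_le_add_mul_fdiff_add_sum_ddq (hdt : 0 < dt) {T : ℝ} {N n : ℕ}
    (hdtT : dt * ((N : ℝ) - 1) = T) (hn : 1 ≤ n) (hnN : n ≤ N) :
    ‖z n‖ ≤ ‖z 1‖ + T * (‖fdiff dt z 1‖ + ∑ i ∈ Icc 2 (N - 1), dt * ‖ddq dt z i‖) := by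
  set B := ‖fdiff dt z 1‖ + ∑ i ∈ Icc 2 (N - 1), dt * ‖ddq dt z i‖
  have hB : ∀ k, 1 ≤ k → k < n → ‖fdiff dt z k‖ ≤ B := by
    intro k hk hkn
    refine (norm_fdiff_le z hdt hk).trans (add_le_add_right ?_ _)
    exact sum_le_sum_of_subset_of_nonneg (Icc_subset_Icc_right (by omega)) fun i _ _ => by positivity
  have hsteps : ((n - 1 : ℕ) : ℝ) * dt ≤ T := by
    have : (n : ℝ) ≤ N := by exact_mod_cast hnN
    rw [← hdtT, mul_comm, Nat.cast_sub hn, Nat.cast_one]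
    gcongr
  calc ‖z n‖ ≤ ‖z 1‖ + (n - 1 : ℕ) * dt * B := norm_le_of_norm_fdiff_le z hdt hn hB
    _ ≤ ‖z 1‖ + T * B := by gcongr

end Normed

theorem stmt_11_general
    {Z : Type*} [NormedAddCommGroup Z] [NormedSpace ℝ Z]
    (T : ℝ) (hT : 0 < T) (N : ℕ)
    (z : ℕ → Z) (dt : ℝ) (hdt : dt = T / ((N : ℝ) - 1)) :
    ∀ j ∈ Finset.Icc 2 N,
      ‖bavg z j‖ ^ 2 ≤ 3 * max (T ^ 3) 1 *
        (‖z 1‖ ^ 2 + ‖fdiff dt z 1‖ ^ 2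
          + ∑ i ∈ Finset.Icc 2 (N - 1), dt * ‖ddq dt z i‖ ^ 2) := by
  intro j hj
  obtain ⟨h2j, hjN⟩ := mem_Icc.1 hj
  have hN : (1 : ℝ) < N := by exact_mod_cast (by omega : 1 < N)
  have hdt0 : 0 < dt := hdt ▸ div_pos hT (by linarith)
  have hdtT : dt * ((N : ℝ) - 1) = T := by
    rw [hdt, div_mul_cancel₀ _ (by linarith : (N : ℝ) - 1 ≠ 0)]
  have hcard : (#(Icc 2 (N - 1)) : ℝ) * dt ≤ T := by
    have : ((N - 1 + 1 - 2 : ℕ) : ℝ) + 1 ≤ N := by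
      exact_mod_cast (by omega : N - 1 + 1 - 2 + 1 ≤ N)
    rw [Nat.card_Icc, ← hdtT, mul_comm]
    gcongr
    linarith
  have hbavg := norm_bavg_le z
    (norm_le_add_mul_fdiff_add_sum_ddq z hdt0 hdtT (by omega) hjN)
    (norm_le_add_mul_fdiff_add_sum_ddq z hdt0 hdtT (by omega) (by omega : j - 1 ≤ N))
  have hCS :=
    (sq_sum_mul_le_card_mul_mul_sum_mul_sq (Icc 2 (N - 1)) (fun i => ‖ddq dt z i‖) dt).trans
      (mul_le_mul_of_nonneg_right hcard (sum_nonneg fun i _ => by positivity))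
  exact (pow_le_pow_left₀ (norm_nonneg _) hbavg 2).trans
    (sq_add_mul_add_le hT.le (sum_nonneg fun i _ => by positivity) hCS)

theorem stmt_11
    {Z : Type*} [NormedAddCommGroup Z] [NormedSpace ℝ Z]
    (T : ℝ) (hT : 0 < T) (N : ℕ) (hN : 3 ≤ N)
    (z : ℕ → Z) (dt : ℝ) (hdt : dt = T / ((N : ℝ) - 1)) :
    ∀ j ∈ Finset.Icc 2 N,
      ‖bavg z j‖ ^ 2 ≤ 3 * max (T ^ 3) 1 *
        (‖z 1‖ ^ 2 + ‖fdiff dt z 1‖ ^ 2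
          + ∑ i ∈ Finset.Icc 2 (N - 1), dt * ‖ddq dt z i‖ ^ 2) :=
  stmt_11_general T hT N z dt hdt
end

section
/- (Weighted sum data error bounds for the DDQ POD operator K₂.) Let T > 0, N ≥ 3, Δt = T/(N−1), and u^1,…,u^N ∈ X. Suppose the POD decomposition hypothesis holds for the DDQ data set w^1 = u^1, w^2 = ∂u^1, w^{j+1} = ∂∂u^j (j = 2,…,N−1) with weights γ_1 = γ_2 = 1 and γ_j = Δt for j = 3,…,N, with POD eigenvalues λ_k^{DDQ}, modes φ_k, and rank s. Then with C = 6 max{T⁴, T}: (i) Σ_{j=1}^N Δt ‖u^j − Π_r^X u^j‖_X² ≤ C Σ_{k=r+1}^s λ_k^{DDQ}; (ii) if (·,·)_Y is a second inner product on X then Σ_{j=1}^N Δt ‖u^j − Π_r^X u^j‖_Y² ≤ C Σ_{k=r+1}^s λ_k^{DDQ} ‖φ_k‖_Y²; (iii) if in addition π_r : X → X is a linear projection onto X_r (π_r∘π_r = π_r, range(π_r) = X_r), then Σ_{j=1}^N Δt ‖u^j − π_r u^j‖_Y² ≤ C Σ_{k=r+1}^s λ_k^{DDQ} ‖φ_k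 − π_r φ_k‖_Y². -/
open Finset RealInnerProductSpace

/-!
By the discrete Taylor formula every snapshot `u j` is a combination `∑ i, c j i • w i` of the DDQ
data, with coefficients `1`, `(j - 1) dt ≤ T` and `(j + 1 - i) dt²`. Expanding the data in the POD
basis, the projection error of `u j` is the same combination of the tails
`η i = ∑_{k > r} √λ_k f_k(i) ψ_k` of the data. A weighted Cauchy–Schwarz inequality bounds its
square by `(∑ i, c j i ^ 2 / γ i) * ∑ i, γ i ‖η i‖²`; the `Γ`-orthonormality of the `f_k` turns the
second factor into `∑_{k > r} λ_k ‖ψ_k‖²`, while the first is at most `1 + T² + T³`. Summing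
over `j` with weight `dt` gives the constant `N dt (1 + T² + T³) ≤ 6 max(T⁴, T)`.
-/

theorem LinearMap.apply_sum_smul_le {M ι : Type*} [AddCommGroup M] [Module ℝ M]
    (Q : M →ₗ[ℝ] M →ₗ[ℝ] ℝ) (hQ : ∀ x, 0 ≤ Q x x) (I : Finset ι) (a γ : ι → ℝ)
    (hγ : ∀ i ∈ I, 0 < γ i) (x : ι → M) :
    Q (∑ i ∈ I, a i • x i) (∑ i ∈ I, a i • x i)
      ≤ (∑ i ∈ I, a i ^ 2 / γ i) * ∑ i ∈ I, γ i * Q (x i) (x i) := by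
  generalize hy : ∑ i ∈ I, a i • x i = y
  set A := ∑ i ∈ I, a i ^ 2 / γ i
  have hA : 0 ≤ A := sum_nonneg fun i hi => div_nonneg (sq_nonneg _) (hγ i hi).le
  rcases hA.eq_or_lt with hA0 | hA0
  · have ha : ∀ i ∈ I, a i = 0 := fun i hi => by
      have := (sum_eq_zero_iff_of_nonneg fun i hi => div_nonneg (sq_nonneg (a i)) (hγ i hi).le).1
        hA0.symm i hi
      simpa [(hγ i hi).ne'] using this
    have hy0 : y = 0 := hy ▸ sum_eq_zero fun i hi => by rw [ha i hi, zero_smul]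
    simp [hy0, ← hA0]
  -- Expand `0 ≤ ∑ γᵢ Q(zᵢ, zᵢ)` with `zᵢ = xᵢ - (aᵢ / (γᵢ A)) • y`:
  -- it equals `∑ γᵢ Q(xᵢ, xᵢ) - Q(y, y) / A`.
  have hleft : ∑ i ∈ I, a i * Q (x i) y = Q y y := by
    rw [← congrArg (Q · y) hy]
    simp only [map_sum, map_smul, LinearMap.sum_apply, LinearMap.smul_apply, smul_eq_mul]
  have hright : ∑ i ∈ I, a i * Q y (x i) = Q y y := by
    rw [← congrArg (Q y) hy]
    simp only [map_sum, map_smul, smul_eq_mul]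
  have hexp : ∑ i ∈ I, γ i * Q (x i - (a i / (γ i * A)) • y) (x i - (a i / (γ i * A)) • y)
      = ∑ i ∈ I, γ i * Q (x i) (x i) - Q y y / A := by
    have hterm : ∀ i ∈ I, γ i * Q (x i - (a i / (γ i * A)) • y) (x i - (a i / (γ i * A)) • y)
        = γ i * Q (x i) (x i) - (a i * Q (x i) y + a i * Q y (x i)) / A
          + a i ^ 2 / γ i * (Q y y / A ^ 2) := fun i hi => by
      have := (hγ i hi).ne'
      simp only [map_sub, map_smul, LinearMap.sub_apply, LinearMap.smul_apply, smul_eq_mul]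
      field_simp
      ring
    rw [sum_congr rfl hterm, sum_add_distrib, sum_sub_distrib, ← sum_div, sum_add_distrib,
      hleft, hright, ← sum_mul]
    field_simp
    ring
  have := hexp ▸ sum_nonneg fun i hi => mul_nonneg (hγ i hi).le (hQ (x i - (a i / (γ i * A)) • y))
  rw [sub_nonneg, div_le_iff₀ hA0] at this
  linarith

theorem Finset.sum_smul_sum_smul_comm {M ι κ : Type*} [AddCommMonoid M] [Module ℝ M]
    (I : Finset ι) (K : Finset κ) (c : ι → ℝ) (a : κ → ι → ℝ) (v : κ → M) :
    ∑ i ∈ I, c i • ∑ k ∈ K, a k i • v k = ∑ k ∈ K, (∑ i ∈ I, c i * a k i) • v k := by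
  simp only [smul_sum, smul_smul, sum_smul]
  exact sum_comm

theorem LinearMap.sum_mul_apply_sum_smul_eq_of_weighted_orthonormal {M ι κ : Type*}
    [AddCommGroup M] [Module ℝ M] [DecidableEq κ] (Q : M →ₗ[ℝ] M →ₗ[ℝ] ℝ) (I : Finset ι) (K : Finset κ) (γ : ι → ℝ)
    (lam : κ → ℝ) (hlam : ∀ k ∈ K, 0 ≤ lam k) (f : κ → ι → ℝ)
    (hf : ∀ k ∈ K, ∀ l ∈ K, ∑ i ∈ I, γ i * f k i * f l i = if k = l then 1 else 0)
    (ψ : κ → M) :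
    ∑ i ∈ I, γ i * Q (∑ k ∈ K, (√(lam k) * f k i) • ψ k) (∑ k ∈ K, (√(lam k) * f k i) • ψ k)
      = ∑ k ∈ K, lam k * Q (ψ k) (ψ k) := by
  calc _ = ∑ k ∈ K, ∑ l ∈ K, √(lam k) * √(lam l) * Q (ψ l) (ψ k)
          * ∑ i ∈ I, γ i * f k i * f l i := by
        simp only [map_sum, map_smul, LinearMap.sum_apply, LinearMap.smul_apply, smul_eq_mul,
          mul_sum]
        rw [sum_comm]
        refine sum_congr rfl fun k _ => ?_
        rw [sum_comm]
        exact sum_congr rfl fun l _ => sum_congr rfl fun i _ => by ring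
    _ = _ := by
        refine sum_congr rfl fun k hk => ?_
        rw [sum_congr rfl fun l hl => by rw [hf k hk l hl, mul_ite, mul_one, mul_zero],
          sum_ite_eq, if_pos hk, Real.mul_self_sqrt (hlam k hk)]

theorem LinearMap.apply_sum_smul_le_of_weighted_orthonormal {M ι κ : Type*} [AddCommGroup M]
    [Module ℝ M] [DecidableEq κ] (Q : M →ₗ[ℝ] M →ₗ[ℝ] ℝ) (hQ : ∀ x, 0 ≤ Q x x)
    (I : Finset ι) (K : Finset κ) (γ : ι → ℝ) (hγ : ∀ i ∈ I, 0 < γ i)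
    (lam : κ → ℝ) (hlam : ∀ k ∈ K, 0 ≤ lam k) (f : κ → ι → ℝ)
    (hf : ∀ k ∈ K, ∀ l ∈ K, ∑ i ∈ I, γ i * f k i * f l i = if k = l then 1 else 0)
    (c : ι → ℝ) (ψ : κ → M) :
    Q (∑ k ∈ K, (∑ i ∈ I, c i * (√(lam k) * f k i)) • ψ k)
        (∑ k ∈ K, (∑ i ∈ I, c i * (√(lam k) * f k i)) • ψ k)
      ≤ (∑ i ∈ I, c i ^ 2 / γ i) * ∑ k ∈ K, lam k * Q (ψ k) (ψ k) := by
  rw [← sum_smul_sum_smul_comm,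
    ← Q.sum_mul_apply_sum_smul_eq_of_weighted_orthonormal I K γ lam hlam f hf ψ]
  exact Q.apply_sum_smul_le hQ I c γ hγ _

theorem Submodule.sub_eq_of_mem_orthogonal {𝕜 E : Type*} [RCLike 𝕜] [NormedAddCommGroup E]
    [InnerProductSpace 𝕜 E] {V : Submodule 𝕜 E} {x p y z : E} (hp : p ∈ V) (hxp : x - p ∈ Vᗮ)
    (hy : y ∈ V) (hz : z ∈ Vᗮ) (hx : x = y + z) : x - p = z := by
  have hpy : p - y ∈ V ⊓ Vᗮ :=
    ⟨V.sub_mem hp hy, (show z - (x - p) = p - y by rw [hx]; abel) ▸ Vᗮ.sub_mem hz hxp⟩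
  rw [V.inf_orthogonal_eq_bot, Submodule.mem_bot, sub_eq_zero] at hpy
  rw [hx, hpy, add_sub_cancel_left]

theorem LinearMap.add_sub_apply_add_of_mem_range {R M : Type*} [Ring R] [AddCommGroup M]
    [Module R M] (π : M →ₗ[R] M) (hπ : ∀ x, π (π x) = π x) {y : M} (hy : y ∈ range π) (z : M) :
    y + z - π (y + z) = z - π z := by
  obtain ⟨x, rfl⟩ := hy
  rw [map_add, hπ]
  abel

section PODModes

variable {E : Type*} [NormedAddCommGroup E] [InnerProductSpace ℝ E] (φ : ℕ → E) (r s : ℕ)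
  (b : ℕ → ℝ)

theorem exists_mem_span_sum_smul_eq_add :
    ∃ y ∈ Submodule.span ℝ (φ '' Set.Icc 1 r),
      ∑ k ∈ Icc 1 s, b k • φ k = y + ∑ k ∈ Icc (r + 1) s, b k • φ k := by
  refine ⟨∑ k ∈ (Icc 1 s).filter (· ≤ r), b k • φ k,
    Submodule.sum_smul_mem _ _ fun k hk => Submodule.subset_span ⟨k, ?_, rfl⟩, ?_⟩
  · simp only [mem_filter, mem_Icc] at hk
    exact ⟨hk.1.1, hk.2⟩
  · rw [← sum_filter_add_sum_filter_not (Icc 1 s) (· ≤ r)]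
    congr 2
    ext k
    simp only [mem_filter, mem_Icc, not_le]
    omega

theorem sum_smul_sub_eq_of_orthogonal
    (hφ : ∀ k ∈ Icc (r + 1) s, ∀ l ∈ Icc 1 r, ⟪φ k, φ l⟫ = 0) (Pr : E → E)
    (hPrmem : ∀ x, Pr x ∈ Submodule.span ℝ (φ '' Set.Icc 1 r))
    (hProrth : ∀ x, ∀ v ∈ Submodule.span ℝ (φ '' Set.Icc 1 r), ⟪x - Pr x, v⟫ = 0) :
    ∑ k ∈ Icc 1 s, b k • φ k - Pr (∑ k ∈ Icc 1 s, b k • φ k)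
      = ∑ k ∈ Icc (r + 1) s, b k • φ k := by
  obtain ⟨y, hy, hsplit⟩ := exists_mem_span_sum_smul_eq_add φ r s b
  have hmodes : Submodule.span ℝ (φ '' ↑(Icc (r + 1) s))
      ≤ (Submodule.span ℝ (φ '' Set.Icc 1 r))ᗮ := by
    refine Submodule.isOrtho_iff_le.mp (Submodule.isOrtho_span.mpr ?_)
    rintro _ ⟨k, hk, rfl⟩ _ ⟨l, hl, rfl⟩
    exact hφ k hk l (by simpa using hl)
  refine Submodule.sub_eq_of_mem_orthogonal (hPrmem _)
    ((Submodule.mem_orthogonal' _ _).mpr (hProrth _)) hy (hmodes ?_) hsplit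
  exact Submodule.sum_smul_mem _ _ fun k hk => Submodule.subset_span ⟨k, hk, rfl⟩

theorem sum_smul_sub_map_eq_of_range_eq (π : E →ₗ[ℝ] E) (hππ : ∀ x, π (π x) = π x)
    (hπrange : LinearMap.range π = Submodule.span ℝ (φ '' Set.Icc 1 r)) :
    ∑ k ∈ Icc 1 s, b k • φ k - π (∑ k ∈ Icc 1 s, b k • φ k)
      = ∑ k ∈ Icc (r + 1) s, b k • (φ k - π (φ k)) := by
  obtain ⟨y, hy, hsplit⟩ := exists_mem_span_sum_smul_eq_add φ r s b
  rw [hsplit, π.add_sub_apply_add_of_mem_range hππ (hπrange ▸ hy), map_sum, ← sum_sub_distrib]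
  simp only [map_smul, smul_sub]

end PODModes

section DifferenceQuotients

variable {Z : Type*} [AddCommGroup Z] [Module ℝ Z] {dt : ℝ} (z : ℕ → Z)

theorem eq_add_smul_fdiff (hdt : dt ≠ 0) (j : ℕ) : z (j + 1) = z j + dt • fdiff dt z j := by
  rw [fdiff, smul_smul, mul_inv_cancel₀ hdt, one_smul, add_sub_cancel]

theorem fdiff_succ (hdt : dt ≠ 0) (j : ℕ) :
    fdiff dt z (j + 1) = fdiff dt z j + dt • ddq dt z (j + 1) := by
  simp only [fdiff, ddq, Nat.add_sub_cancel, smul_smul]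
  match_scalars <;> field_simp <;> ring

theorem fdiff_eq_add_sum_ddq (hdt : dt ≠ 0) {j : ℕ} (hj : 1 ≤ j) :
    fdiff dt z j = fdiff dt z 1 + ∑ m ∈ Ico 2 (j + 1), dt • ddq dt z m := by
  induction j, hj using Nat.le_induction with
  | base => simp
  | succ j hj ih => rw [sum_Ico_succ_top (by omega), ← add_assoc, ← ih, fdiff_succ z hdt]

theorem eq_add_fdiff_add_sum_ddq (hdt : dt ≠ 0) {j : ℕ} (hj : 1 ≤ j) :
    z j = z 1 + (((j : ℝ) - 1) * dt) • fdiff dt z 1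
      + ∑ m ∈ Ico 2 j, (((j - m : ℕ) : ℝ) * dt ^ 2) • ddq dt z m := by
  induction j, hj using Nat.le_induction with
  | base => simp
  | succ j hj ih =>
    have hsum : ∑ m ∈ Ico 2 (j + 1), (((j + 1 - m : ℕ) : ℝ) * dt ^ 2) • ddq dt z m
        = ∑ m ∈ Ico 2 j, (((j - m : ℕ) : ℝ) * dt ^ 2) • ddq dt z m
          + dt • ∑ m ∈ Ico 2 (j + 1), dt • ddq dt z m := by
      have hext : ∑ m ∈ Ico 2 j, (((j - m : ℕ) : ℝ) * dt ^ 2) • ddq dt z m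
          = ∑ m ∈ Ico 2 (j + 1), (((j - m : ℕ) : ℝ) * dt ^ 2) • ddq dt z m :=
        sum_subset (Ico_subset_Ico_right (by omega)) fun m hm hmj => by
          rw [show m = j by simp only [mem_Ico] at hm hmj; omega]
          simp
      rw [hext, smul_sum, ← sum_add_distrib]
      refine sum_congr rfl fun m hm => ?_
      rw [show j + 1 - m = j - m + 1 by simp only [mem_Ico] at hm; omega]
      push_cast
      module
    rw [eq_add_smul_fdiff z hdt, ih, fdiff_eq_add_sum_ddq z hdt hj, hsum]
    push_cast
    module

end DifferenceQuotients

/-- For the DDQ data `w 1 = u 1`, `w 2 = ∂u 1`, `w (m + 1) = ∂∂u m`, the discrete Taylor formula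
reads `u j = w 1 + (j - 1) dt • w 2 + dt² • ∑_{i=3}^{j} (j + 1 - i) • w i`; the truncated
subtraction makes the coefficient vanish for `i > j`. -/
noncomputable def ddqCoeff (dt : ℝ) (j i : ℕ) : ℝ :=
  if i = 1 then 1 else if i = 2 then ((j : ℝ) - 1) * dt else ((j + 1 - i : ℕ) : ℝ) * dt ^ 2

theorem Finset.Icc_one_eq_insert_insert {N : ℕ} (hN : 2 ≤ N) :
    Icc 1 N = insert 1 (insert 2 (Icc 3 N)) := by
  ext i
  simp only [mem_Icc, mem_insert]
  omega

theorem eq_sum_ddqCoeff_smul {Z : Type*} [AddCommGroup Z] [Module ℝ Z] {dt : ℝ} (hdt : dt ≠ 0)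
    {N : ℕ} (hN : 2 ≤ N) (u w : ℕ → Z) (hw1 : w 1 = u 1) (hw2 : w 2 = fdiff dt u 1)
    (hwj : ∀ j ∈ Icc 2 (N - 1), w (j + 1) = ddq dt u j) {j : ℕ} (hj : j ∈ Icc 1 N) :
    u j = ∑ i ∈ Icc 1 N, ddqCoeff dt j i • w i := by
  rw [mem_Icc] at hj
  have hremainder : ∑ m ∈ Ico 2 j, (((j - m : ℕ) : ℝ) * dt ^ 2) • ddq dt u m
      = ∑ i ∈ Icc 3 N, ddqCoeff dt j i • w i := by
    calc _ = ∑ m ∈ Ico 2 j, ddqCoeff dt j (m + 1) • w (m + 1) := by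
          refine sum_congr rfl fun m hm => ?_
          rw [mem_Ico] at hm
          rw [hwj m (mem_Icc.mpr ⟨hm.1, by omega⟩), ddqCoeff, if_neg (by omega), if_neg (by omega),
            Nat.add_sub_add_right]
      _ = ∑ i ∈ Ico 3 (j + 1), ddqCoeff dt j i • w i :=
          sum_Ico_add' (fun i => ddqCoeff dt j i • w i) 2 j 1
      _ = _ := sum_subset (fun i hi => by simp only [mem_Ico, mem_Icc] at hi ⊢; omega)
          fun i hi hij => by
            simp only [mem_Ico, mem_Icc, not_and, not_lt] at hi hij
            rw [ddqCoeff, if_neg (by omega), if_neg (by omega), Nat.sub_eq_zero_of_le (hij hi.1)]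
            simp
  rw [Icc_one_eq_insert_insert hN, sum_insert (by simp), sum_insert (by simp), ← hremainder,
    eq_add_fdiff_add_sum_ddq u hdt hj.1, hw1, hw2, ← add_assoc]
  simp [ddqCoeff]

theorem sum_ddqCoeff_sq_div_le {dt : ℝ} (hdt : 0 < dt) {N : ℕ} (hN : 2 ≤ N) (γ : ℕ → ℝ)
    (hγ1 : γ 1 = 1) (hγ2 : γ 2 = 1) (hγj : ∀ j ∈ Icc 3 N, γ j = dt) {j : ℕ} (hj : j ∈ Icc 1 N) :
    ∑ i ∈ Icc 1 N, ddqCoeff dt j i ^ 2 / γ i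
      ≤ 1 + (((N : ℝ) - 1) * dt) ^ 2 + (((N : ℝ) - 1) * dt) ^ 3 := by
  rw [mem_Icc] at hj
  have hjN : (j : ℝ) ≤ N := by exact_mod_cast hj.2
  have hj1 : (1 : ℝ) ≤ j := by exact_mod_cast hj.1
  have hfirst : ddqCoeff dt j 2 ^ 2 / γ 2 ≤ (((N : ℝ) - 1) * dt) ^ 2 := by
    rw [hγ2, div_one, ddqCoeff, if_neg (by omega), if_pos rfl]
    gcongr
  have hrest : ∑ i ∈ Icc 3 N, ddqCoeff dt j i ^ 2 / γ i ≤ (((N : ℝ) - 1) * dt) ^ 3 := by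
    have hterm : ∀ i ∈ Icc 3 N, ddqCoeff dt j i ^ 2 / γ i ≤ (((N : ℝ) - 1) * dt) ^ 2 * dt := by
      intro i hi
      rw [hγj i hi, ddqCoeff, if_neg (by simp at hi; omega), if_neg (by simp at hi; omega)]
      have hm : ((j + 1 - i : ℕ) : ℝ) + 1 ≤ N := by
        exact_mod_cast (show j + 1 - i + 1 ≤ N by simp only [mem_Icc] at hi; omega)
      rw [show (((j + 1 - i : ℕ) : ℝ) * dt ^ 2) ^ 2 / dt = (((j + 1 - i : ℕ) : ℝ) * dt) ^ 2 * dt by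
        field_simp]
      gcongr
      linarith
    have hcard : ((#(Icc 3 N) : ℕ) : ℝ) + 1 ≤ N := by
      rw [Nat.card_Icc]
      exact_mod_cast (show N + 1 - 3 + 1 ≤ N by omega)
    calc _ ≤ ∑ i ∈ Icc 3 N, (((N : ℝ) - 1) * dt) ^ 2 * dt := sum_le_sum hterm
      _ = (#(Icc 3 N) : ℝ) * dt * (((N : ℝ) - 1) * dt) ^ 2 := by rw [sum_const, nsmul_eq_mul]; ring
      _ ≤ ((N : ℝ) - 1) * dt * (((N : ℝ) - 1) * dt) ^ 2 := by gcongr; linarith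
      _ = _ := by ring
  rw [Icc_one_eq_insert_insert hN, sum_insert (by simp), sum_insert (by simp), ← add_assoc]
  have hzeroth : ddqCoeff dt j 1 ^ 2 / γ 1 = 1 := by simp [ddqCoeff, hγ1]
  linarith

theorem ddq_constant_le {T : ℝ} (hT : 0 < T) {N : ℕ} (hN : 3 ≤ N) :
    N * (T / ((N : ℝ) - 1)) * (1 + T ^ 2 + T ^ 3) ≤ 6 * max (T ^ 4) T := by
  have hN' : (3 : ℝ) ≤ N := by exact_mod_cast hN
  have hNdt : N * (T / ((N : ℝ) - 1)) ≤ 3 / 2 * T := by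
    rw [mul_div_assoc', div_le_iff₀ (by linarith)]
    nlinarith
  have hT3 : T ^ 3 ≤ max (T ^ 4) T := by
    rcases le_total T 1 with h | h
    · exact (pow_le_of_le_one hT.le h (by norm_num)).trans (le_max_right _ _)
    · exact (pow_le_pow_right₀ h (by norm_num)).trans (le_max_left _ _)
  calc _ ≤ 3 / 2 * T * (1 + T ^ 2 + T ^ 3) := by gcongr
    _ = 3 / 2 * (T + T ^ 3 + T ^ 4) := by ring
    _ ≤ 3 / 2 * (max (T ^ 4) T + max (T ^ 4) T + max (T ^ 4) T) := by
        gcongr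
        exacts [le_max_right _ _, le_max_left _ _]
    _ ≤ _ := by nlinarith [le_max_right (T ^ 4) T]

theorem div_natCast_sub_one_pos {T : ℝ} (hT : 0 < T) {N : ℕ} (hN : 2 ≤ N) :
    0 < T / ((N : ℝ) - 1) :=
  div_pos hT (sub_pos.mpr (by exact_mod_cast hN))

theorem sum_dt_apply_ddq_tail_le {M : Type*} [AddCommGroup M] [Module ℝ M]
    (Q : M →ₗ[ℝ] M →ₗ[ℝ] ℝ) (hQ : ∀ x, 0 ≤ Q x x) {T : ℝ} (hT : 0 < T) {N : ℕ} (hN : 3 ≤ N)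
    {dt : ℝ} (hdt : dt = T / ((N : ℝ) - 1)) (γ : ℕ → ℝ) (hγ1 : γ 1 = 1) (hγ2 : γ 2 = 1)
    (hγj : ∀ j ∈ Icc 3 N, γ j = dt) (lam : ℕ → ℝ) (f : ℕ → ℕ → ℝ) (K : Finset ℕ)
    (hlam : ∀ k ∈ K, 0 ≤ lam k)
    (hf : ∀ k ∈ K, ∀ l ∈ K, ∑ j ∈ Icc 1 N, γ j * f k j * f l j = if k = l then 1 else 0)
    (ψ : ℕ → M) :
    ∑ j ∈ Icc 1 N, dt *
        Q (∑ k ∈ K, (∑ i ∈ Icc 1 N, ddqCoeff dt j i * (√(lam k) * f k i)) • ψ k)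
          (∑ k ∈ K, (∑ i ∈ Icc 1 N, ddqCoeff dt j i * (√(lam k) * f k i)) • ψ k)
      ≤ 6 * max (T ^ 4) T * ∑ k ∈ K, lam k * Q (ψ k) (ψ k) := by
  have hdt0 : 0 < dt := hdt ▸ div_natCast_sub_one_pos hT (by omega)
  have hT' : ((N : ℝ) - 1) * dt = T := by
    rw [hdt, mul_div_cancel₀]
    exact (sub_pos.mpr (by exact_mod_cast (by omega : 1 < N))).ne'
  have hγ : ∀ i ∈ Icc 1 N, 0 < γ i := fun i hi => by
    rcases (show i = 1 ∨ i = 2 ∨ i ∈ Icc 3 N by simp only [mem_Icc] at hi ⊢; omega)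
      with rfl | rfl | hi3
    exacts [hγ1 ▸ one_pos, hγ2 ▸ one_pos, hγj i hi3 ▸ hdt0]
  have hS : 0 ≤ ∑ k ∈ K, lam k * Q (ψ k) (ψ k) :=
    sum_nonneg fun k hk => mul_nonneg (hlam k hk) (hQ _)
  calc _ ≤ ∑ j ∈ Icc 1 N, dt * ((1 + T ^ 2 + T ^ 3) * ∑ k ∈ K, lam k * Q (ψ k) (ψ k)) := by
        refine sum_le_sum fun j hj => ?_
        gcongr
        refine (Q.apply_sum_smul_le_of_weighted_orthonormal hQ _ K γ hγ lam hlam f hf _ ψ).trans ?_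
        gcongr
        simpa only [hT'] using sum_ddqCoeff_sq_div_le hdt0 (by omega) γ hγ1 hγ2 hγj hj
    _ = N * dt * (1 + T ^ 2 + T ^ 3) * ∑ k ∈ K, lam k * Q (ψ k) (ψ k) := by
        rw [sum_const, Nat.card_Icc, nsmul_eq_mul, Nat.add_sub_cancel]
        ring
    _ ≤ _ := mul_le_mul_of_nonneg_right (hdt ▸ ddq_constant_le hT hN) hS

theorem stmt_15_general
    {X : Type*} [NormedAddCommGroup X] [InnerProductSpace ℝ X]
    (T : ℝ) (hT : 0 < T) (N : ℕ) (hN : 3 ≤ N)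
    (dt : ℝ) (hdt : dt = T / ((N : ℝ) - 1))
    (u w : ℕ → X) (γ : ℕ → ℝ)
    (hw1 : w 1 = u 1) (hw2 : w 2 = fdiff dt u 1)
    (hwj : ∀ j ∈ Finset.Icc 2 (N - 1), w (j + 1) = ddq dt u j)
    (hγ1 : γ 1 = 1) (hγ2 : γ 2 = 1) (hγj : ∀ j ∈ Finset.Icc 3 N, γ j = dt)
    (s : ℕ) (lam : ℕ → ℝ) (φ : ℕ → X) (f : ℕ → ℕ → ℝ)
    (hlam : ∀ k ∈ Finset.Icc 1 s, 0 < lam k)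
    (hφ : ∀ k ∈ Finset.Icc 1 s, ∀ l ∈ Finset.Icc 1 s,
      ⟪φ k, φ l⟫ = if k = l then 1 else 0)
    (hf : ∀ k ∈ Finset.Icc 1 s, ∀ l ∈ Finset.Icc 1 s,
      (∑ j ∈ Finset.Icc 1 N, γ j * f k j * f l j) = if k = l then 1 else 0)
    (hsvd : ∀ j ∈ Finset.Icc 1 N,
      w j = ∑ k ∈ Finset.Icc 1 s, (Real.sqrt (lam k) * f k j) • φ k)
    (r : ℕ)
    (Pr : X → X)
    (hPrmem : ∀ x, Pr x ∈ Submodule.span ℝ (φ '' Set.Icc 1 r))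
    (hProrth : ∀ x, ∀ v ∈ Submodule.span ℝ (φ '' Set.Icc 1 r),
      ⟪x - Pr x, v⟫ = 0)
    (ipY : X →ₗ[ℝ] X →ₗ[ℝ] ℝ)
    (hYpos : ∀ x : X, x ≠ 0 → 0 < ipY x x)
    (π : X →ₗ[ℝ] X)
    (hππ : ∀ x, π (π x) = π x)
    (hπrange : LinearMap.range π = Submodule.span ℝ (φ '' Set.Icc 1 r)) :
    (∑ j ∈ Finset.Icc 1 N, dt * ‖u j - Pr (u j)‖ ^ 2
      ≤ 6 * max (T ^ 4) T * ∑ k ∈ Finset.Icc (r + 1) s, lam k)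
    ∧ (∑ j ∈ Finset.Icc 1 N, dt * ipY (u j - Pr (u j)) (u j - Pr (u j))
      ≤ 6 * max (T ^ 4) T * ∑ k ∈ Finset.Icc (r + 1) s, lam k * ipY (φ k) (φ k))
    ∧ (∑ j ∈ Finset.Icc 1 N, dt * ipY (u j - π (u j)) (u j - π (u j))
      ≤ 6 * max (T ^ 4) T *
        ∑ k ∈ Finset.Icc (r + 1) s, lam k * ipY (φ k - π (φ k)) (φ k - π (φ k))) := by
  have hdt0 : 0 < dt := hdt ▸ div_natCast_sub_one_pos hT (by omega)
  have hK : Icc (r + 1) s ⊆ Icc 1 s := Icc_subset_Icc_left (by omega)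
  have key := fun (Q : X →ₗ[ℝ] X →ₗ[ℝ] ℝ) hQ (ψ : ℕ → X) =>
    sum_dt_apply_ddq_tail_le Q hQ hT hN hdt γ hγ1 hγ2 hγj lam f _
      (fun k hk => (hlam k (hK hk)).le) (fun k hk l hl => hf k (hK hk) l (hK hl)) ψ
  set b : ℕ → ℕ → ℝ := fun j k => ∑ i ∈ Icc 1 N, ddqCoeff dt j i * (√(lam k) * f k i)
  have hu : ∀ j ∈ Icc 1 N, u j = ∑ k ∈ Icc 1 s, b j k • φ k := fun j hj => by
    rw [eq_sum_ddqCoeff_smul hdt0.ne' (by omega) u w hw1 hw2 hwj hj, ← sum_smul_sum_smul_comm]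
    exact sum_congr rfl fun i hi => by rw [hsvd i hi]
  have hP : ∀ j ∈ Icc 1 N, u j - Pr (u j) = ∑ k ∈ Icc (r + 1) s, b j k • φ k := fun j hj => by
    rw [hu j hj]
    refine sum_smul_sub_eq_of_orthogonal φ r s (b j) (fun k hk l hl => ?_) Pr hPrmem hProrth
    simp only [mem_Icc] at hk hl
    rw [hφ k (hK (mem_Icc.mpr hk)) l (mem_Icc.mpr ⟨hl.1, by omega⟩), if_neg (by omega)]
  have hπ : ∀ j ∈ Icc 1 N, u j - π (u j) = ∑ k ∈ Icc (r + 1) s, b j k • (φ k - π (φ k)) :=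
    fun j hj => hu j hj ▸ sum_smul_sub_map_eq_of_range_eq φ r s (b j) π hππ hπrange
  have hY : ∀ x, 0 ≤ ipY x x := fun x => by
    rcases eq_or_ne x 0 with rfl | hx
    exacts [by simp, (hYpos x hx).le]
  refine ⟨?_, ?_, ?_⟩
  · calc _ = ∑ j ∈ Icc 1 N, dt * innerₗ X (∑ k ∈ Icc (r + 1) s, b j k • φ k)
          (∑ k ∈ Icc (r + 1) s, b j k • φ k) := sum_congr rfl fun j hj => by
          rw [innerₗ_apply_apply, ← hP j hj, real_inner_self_eq_norm_sq]
      _ ≤ _ := key _ (fun _ => real_inner_self_nonneg) φ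
      _ = _ := by
          refine congrArg _ (sum_congr rfl fun k hk => ?_)
          rw [innerₗ_apply_apply, hφ k (hK hk) k (hK hk), if_pos rfl, mul_one]
  · exact (sum_congr rfl fun j hj => by rw [hP j hj]).trans_le (key ipY hY φ)
  · exact (sum_congr rfl fun j hj => by rw [hπ j hj]).trans_le (key ipY hY _)

theorem stmt_15
    {X : Type*} [NormedAddCommGroup X] [InnerProductSpace ℝ X] [CompleteSpace X]
    (T : ℝ) (hT : 0 < T) (N : ℕ) (hN : 3 ≤ N)
    (dt : ℝ) (hdt : dt = T / ((N : ℝ) - 1))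
    (u w : ℕ → X) (γ : ℕ → ℝ)
    (hw1 : w 1 = u 1) (hw2 : w 2 = fdiff dt u 1)
    (hwj : ∀ j ∈ Finset.Icc 2 (N - 1), w (j + 1) = ddq dt u j)
    (hγ1 : γ 1 = 1) (hγ2 : γ 2 = 1) (hγj : ∀ j ∈ Finset.Icc 3 N, γ j = dt)
    (s : ℕ) (lam : ℕ → ℝ) (φ : ℕ → X) (f : ℕ → ℕ → ℝ)
    (hlam : ∀ k ∈ Finset.Icc 1 s, 0 < lam k)
    (hφ : ∀ k ∈ Finset.Icc 1 s, ∀ l ∈ Finset.Icc 1 s,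
      ⟪φ k, φ l⟫ = if k = l then 1 else 0)
    (hf : ∀ k ∈ Finset.Icc 1 s, ∀ l ∈ Finset.Icc 1 s,
      (∑ j ∈ Finset.Icc 1 N, γ j * f k j * f l j) = if k = l then 1 else 0)
    (hsvd : ∀ j ∈ Finset.Icc 1 N,
      w j = ∑ k ∈ Finset.Icc 1 s, (Real.sqrt (lam k) * f k j) • φ k)
    (r : ℕ) (hr1 : 1 ≤ r) (hrs : r ≤ s)
    (Pr : X → X)
    (hPrmem : ∀ x, Pr x ∈ Submodule.span ℝ (φ '' Set.Icc 1 r))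
    (hProrth : ∀ x, ∀ v ∈ Submodule.span ℝ (φ '' Set.Icc 1 r),
      ⟪x - Pr x, v⟫ = 0)
    (ipY : X →ₗ[ℝ] X →ₗ[ℝ] ℝ)
    (hYsymm : ∀ x y, ipY x y = ipY y x)
    (hYpos : ∀ x : X, x ≠ 0 → 0 < ipY x x)
    (π : X →ₗ[ℝ] X)
    (hππ : ∀ x, π (π x) = π x)
    (hπrange : LinearMap.range π = Submodule.span ℝ (φ '' Set.Icc 1 r)) :
    (∑ j ∈ Finset.Icc 1 N, dt * ‖u j - Pr (u j)‖ ^ 2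
      ≤ 6 * max (T ^ 4) T * ∑ k ∈ Finset.Icc (r + 1) s, lam k)
    ∧ (∑ j ∈ Finset.Icc 1 N, dt * ipY (u j - Pr (u j)) (u j - Pr (u j))
      ≤ 6 * max (T ^ 4) T * ∑ k ∈ Finset.Icc (r + 1) s, lam k * ipY (φ k) (φ k))
    ∧ (∑ j ∈ Finset.Icc 1 N, dt * ipY (u j - π (u j)) (u j - π (u j))
      ≤ 6 * max (T ^ 4) T *
        ∑ k ∈ Finset.Icc (r + 1) s, lam k * ipY (φ k - π (φ k)) (φ k - π (φ k))) :=
  stmt_15_general T hT N hN dt hdt u w γ hw1 hw2 hwj hγ1 hγ2 hγj s lam φ f hlam hφ hf hsvd r Pr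
    hPrmem hProrth ipY hYpos π hππ hπrange
end
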